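/- arXiv:1302.6485 — 2 statements merged into one kernel-verified Lean document; each statement's English description precedes it below -/
import Mathlib

section
/- For all positive integers n and m, the following identity of polynomials in x over ℚ holds: $\sum_{r=0}^{n-1}\sum_{s=0}^{r}\sum_{k=0}^{s} \frac{\binom{r}{s}\binom{n-1}{r}\binom{s}{k}}{\binom{2n-1-r}{n}}\,(-n)^{s-k}\, S_2(2n-1-r,n)\, S_k^{(n)}(m)\, x^{r-s} \;=\; \sum_{r=0}^{n-1}\sum_{s=0}^{r} \frac{\binom{r}{s}\binom{n-1}{r}}{\binom{s+n}{n}\binom{2n-1-r}{n}}\, S_2(s+n,n)\, S_2(2n-1-r,n)\, m^{n+s}\, B_{r-s}^{(n)}(x)$. -/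
open PowerSeries Polynomial Finset

/-- Stirling numbers of the second kind `S₂(n,k)`: the number of partitions of an
    `n`-element set into `k` nonempty blocks, via the recurrence
    `S₂(n+1,k+1) = (k+1)·S₂(n,k+1) + S₂(n,k)`. -/
def stirling2 : ℕ → ℕ → ℕ
  | 0, 0 => 1
  | 0, _ + 1 => 0
  | _ + 1, 0 => 0
  | n + 1, k + 1 => (k + 1) * stirling2 n (k + 1) + stirling2 n k

/-- The weighted sum `v₁ + 2v₂ + ⋯ + m·v_m` of a tuple `v : Fin m → ℕ`. -/
def tupleWeight (m : ℕ) (v : Fin m → ℕ) : ℕ := ∑ i : Fin m, (i.1 + 1) * v i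

/-- The multiple power sum
    `S_k^{(n)}(m) = ∑_{0 ≤ v₁,…,v_m ≤ n, v₁+⋯+v_m = n} (n choose v₁,…,v_m) (v₁+2v₂+⋯+m·v_m)^k`. -/
noncomputable def multiPowerSum (n m k : ℕ) : ℚ :=
  ∑ v ∈ (Fintype.piFinset fun _ : Fin m => Finset.range (n + 1)).filter
      (fun v => ∑ i : Fin m, v i = n),
    (Nat.multinomial Finset.univ v : ℚ) * (tupleWeight m v : ℚ) ^ k

/-- The formal power series `(e^t - 1)/t = ∑_k t^k/(k+1)!` over `ℚ[y]`. -/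
noncomputable def bexp : PowerSeries (Polynomial ℚ) :=
  PowerSeries.mk fun k => Polynomial.C (((k + 1).factorial : ℚ)⁻¹)

/-- The formal power series `e^{yt} = ∑_k y^k t^k/k!` over `ℚ[y]` (with `y = X`). -/
noncomputable def expPoly : PowerSeries (Polynomial ℚ) :=
  PowerSeries.mk fun k => Polynomial.C ((k.factorial : ℚ)⁻¹) * Polynomial.X ^ k

/-- The Bernoulli polynomial `B_n^{(α)}(y)` of order `α`, defined by
    `(t/(e^t-1))^α e^{yt} = ∑_n B_n^{(α)}(y) t^n/n!`. -/
noncomputable def bernoulliH (α n : ℕ) : Polynomial ℚ :=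
  (n.factorial : ℚ) • PowerSeries.coeff n
    ((PowerSeries.invOfUnit bexp 1) ^ α * expPoly)

/-!
Put `E(t) = ∑_{j=1}^m e^{jt}`. The multinomial theorem gives `E(t)^n = ∑_k S_k^{(n)}(m) t^k/k!`,
and summing the geometric series, `(e^t - 1) e^{-t} E(t) = e^{mt} - 1`. Hence
`e^{-nt} E(t)^n = (t/(e^t-1))^n ((e^{mt}-1)/t)^n`, where
`(e^{mt}-1)^n = n! ∑_j S₂(j,n) m^j t^j/j!` because differentiating `(e^t-1)^{n+1}` reproduces
the recurrence of `S₂`. Multiplying by `e^{xt}` and comparing the coefficients of `t^r/r!`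
yields, for every `r`,
`∑_{s,k} C(r,s) C(s,k) (-n)^{s-k} S_k^{(n)}(m) x^{r-s}
  = ∑_s C(r,s)/C(s+n,n) S₂(s+n,n) m^{n+s} B_{r-s}^{(n)}(x)`,
and the theorem is a linear combination of these identities.
-/

open scoped Nat

namespace PowerSeries

variable {A : Type*} [CommRing A] [Algebra ℚ A]

noncomputable def egfCoeff (n : ℕ) : A⟦X⟧ →ₗ[A] A := (n ! : ℚ) • coeff n

theorem egfCoeff_apply (n : ℕ) (f : A⟦X⟧) : egfCoeff n f = (n ! : ℚ) • coeff n f := rfl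

theorem egfCoeff_mul (f g : A⟦X⟧) (r : ℕ) :
    egfCoeff r (f * g) =
      ∑ s ∈ range (r + 1), (r.choose s : A) * (egfCoeff s f * egfCoeff (r - s) g) := by
  rw [egfCoeff_apply, coeff_mul,
    Nat.sum_antidiagonal_eq_sum_range_succ (fun a b => coeff a f * coeff b g), smul_sum]
  refine sum_congr rfl fun s hs => ?_
  rw [← Nat.choose_mul_factorial_mul_factorial (Nat.lt_succ_iff.mp (mem_range.mp hs)),
    Nat.cast_mul, Nat.cast_mul, mul_assoc, mul_smul, ← smul_mul_smul_comm, Nat.cast_smul_eq_nsmul,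
    nsmul_eq_mul, egfCoeff_apply, egfCoeff_apply]

theorem egfCoeff_rescale (a : A) (f : A⟦X⟧) (n : ℕ) :
    egfCoeff n (rescale a f) = a ^ n * egfCoeff n f := by
  rw [egfCoeff_apply, egfCoeff_apply, coeff_rescale, mul_smul_comm]

theorem egfCoeff_exp (n : ℕ) : egfCoeff n (exp A) = 1 := by
  rw [egfCoeff_apply, coeff_exp, Algebra.smul_def, ← map_mul, mul_one_div_cancel (by positivity),
    map_one]

theorem egfCoeff_rescale_exp (a : A) (n : ℕ) : egfCoeff n (rescale a (exp A)) = a ^ n := by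
  rw [egfCoeff_rescale, egfCoeff_exp, mul_one]

theorem egfCoeff_derivative (f : A⟦X⟧) (n : ℕ) :
    egfCoeff n (d⁄dX A f) = egfCoeff (n + 1) f := by
  simp only [egfCoeff_apply, coeff_derivative, Algebra.smul_def, Nat.factorial_succ, Nat.cast_mul,
    map_mul, map_natCast]
  push_cast
  ring

theorem coeff_eq_inv_factorial_smul_egfCoeff (f : A⟦X⟧) (n : ℕ) :
    coeff n f = ((n ! : ℚ)⁻¹) • egfCoeff n f := by
  rw [egfCoeff_apply, smul_smul, inv_mul_cancel₀ (by positivity), one_smul]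

theorem derivative_exp_sub_one_pow_succ (n : ℕ) :
    d⁄dX A ((exp A - 1) ^ (n + 1)) = (n + 1) • ((exp A - 1) ^ (n + 1) + (exp A - 1) ^ n) := by
  rw [Derivation.leibniz_pow, map_sub, derivative_exp, derivative_one, sub_zero,
    Nat.add_sub_cancel, smul_eq_mul]
  congr 1
  ring

theorem egfCoeff_exp_sub_one_pow (n j : ℕ) :
    egfCoeff j ((exp A - 1) ^ n) = ((n ! * stirling2 j n : ℕ) : A) := by
  induction j generalizing n with
  | zero =>
    rw [egfCoeff_apply, coeff_zero_eq_constantCoeff_apply, map_pow, map_sub, constantCoeff_exp,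
      map_one, sub_self]
    cases n <;> simp [stirling2]
  | succ j ih =>
    cases n with
    | zero => simp [egfCoeff_apply, coeff_one, stirling2]
    | succ n =>
      rw [← egfCoeff_derivative, derivative_exp_sub_one_pow_succ, map_nsmul, map_add, ih, ih]
      simp only [stirling2, Nat.factorial_succ, nsmul_eq_mul]
      push_cast
      ring

theorem rescale_exp_pow (a : A) (k : ℕ) : rescale a (exp A) ^ k = rescale (k * a) (exp A) := by
  rw [← map_pow, exp_pow_eq_rescale_exp, rescale_rescale]

theorem prod_rescale_exp {ι : Type*} (s : Finset ι) (a : ι → A) :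
    ∏ i ∈ s, rescale (a i) (exp A) = rescale (∑ i ∈ s, a i) (exp A) := by
  induction s using Finset.cons_induction with
  | empty => simp
  | cons i s hi ih => rw [prod_cons, sum_cons, ih, exp_mul_exp_eq_exp_add]

theorem piAntidiag_univ_eq_filter_piFinset_range (m n : ℕ) :
    piAntidiag (univ : Finset (Fin m)) n =
      (Fintype.piFinset fun _ : Fin m => range (n + 1)).filter
        (fun v => ∑ i : Fin m, v i = n) := by
  ext v
  simp only [mem_piAntidiag, mem_filter, Fintype.mem_piFinset, mem_range, Nat.lt_succ_iff,
    mem_univ, implies_true, and_true]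
  exact ⟨fun h => ⟨fun i => h ▸ single_le_sum (fun _ _ => Nat.zero_le _) (mem_univ i), h⟩,
    And.right⟩

theorem egfCoeff_sum_rescale_exp_pow (n m k : ℕ) :
    egfCoeff k ((∑ j : Fin m, rescale ((j : A) + 1) (exp A)) ^ n) =
      algebraMap ℚ A (multiPowerSum n m k) := by
  rw [sum_pow_eq_sum_piAntidiag, map_sum, multiPowerSum,
    ← piAntidiag_univ_eq_filter_piFinset_range, map_sum]
  refine sum_congr rfl fun v _ => ?_
  simp only [rescale_exp_pow, prod_rescale_exp, ← nsmul_eq_mul, map_nsmul, egfCoeff_rescale_exp,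
    tupleWeight, map_pow, map_natCast]
  push_cast
  simp only [nsmul_eq_mul, mul_comm]

theorem sum_rescale_exp_pow_mul_rescale_neg_exp (n m : ℕ) :
    (∑ j : Fin m, rescale ((j : A) + 1) (exp A)) ^ n * rescale (-(n : A)) (exp A) =
      (∑ j ∈ range m, exp A ^ j) ^ n := by
  have shift (j : ℕ) : rescale ((j : A) + 1) (exp A) * rescale (-1 : A) (exp A) = exp A ^ j := by
    rw [exp_mul_exp_eq_exp_add, exp_pow_eq_rescale_exp, add_neg_cancel_right]
  rw [← mul_neg_one, ← rescale_exp_pow, ← mul_pow, sum_mul,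
    Fin.sum_univ_eq_sum_range (fun j => rescale ((j : A) + 1) (exp A) * rescale (-1 : A) (exp A))]
  simp only [shift]

theorem egfCoeff_eq_of_X_pow_mul_eq_rescale_exp_sub_one_pow {H : A⟦X⟧} {a : A} {n : ℕ}
    (hH : X ^ n * H = (rescale a (exp A) - 1) ^ n) (s : ℕ) :
    egfCoeff s H = ((s + n).choose n : ℚ)⁻¹ • (a ^ (s + n) * stirling2 (s + n) n) := by
  have hcoeff : coeff s H = coeff (s + n) (rescale a ((exp A - 1) ^ n)) := by
    rw [map_pow, map_sub, map_one, ← hH, coeff_X_pow_mul]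
  have hcast :
      ((n ! * stirling2 (s + n) n : ℕ) : A) = (n ! : ℚ) • (stirling2 (s + n) n : A) := by
    rw [Nat.cast_mul, ← nsmul_eq_mul, Nat.cast_smul_eq_nsmul]
  rw [egfCoeff_apply, hcoeff, coeff_eq_inv_factorial_smul_egfCoeff, egfCoeff_rescale,
    egfCoeff_exp_sub_one_pow, hcast, mul_smul_comm, smul_smul, smul_smul,
    Nat.cast_choose ℚ (Nat.le_add_left n s), Nat.add_sub_cancel]
  congr 1
  field_simp

end PowerSeries

theorem X_mul_bexp : PowerSeries.X * bexp = exp ℚ[X] - 1 := by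
  ext (_ | k)
  · simp
  · simp [bexp, coeff_succ_X_mul, Nat.factorial]

theorem bexp_mul_invOfUnit : bexp * invOfUnit bexp 1 = 1 :=
  mul_invOfUnit _ _ (by simp [bexp, ← coeff_zero_eq_constantCoeff_apply])

theorem expPoly_eq_rescale_exp : expPoly = rescale Polynomial.X (exp ℚ[X]) := by
  ext k
  rw [expPoly, coeff_mk, coeff_rescale, coeff_exp, Polynomial.algebraMap_eq, mul_comm, one_div]

theorem X_mul_C_mul_rescale_bexp (a : ℚ[X]) :
    PowerSeries.X * (PowerSeries.C a * rescale a bexp) = rescale a (exp ℚ[X]) - 1 := by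
  rw [← mul_assoc, mul_comm PowerSeries.X, ← rescale_X, ← map_mul, X_mul_bexp, map_sub,
    map_one]

theorem invOfUnit_bexp_pow_mul (n m : ℕ) :
    invOfUnit bexp 1 ^ n * (PowerSeries.C (m : ℚ[X]) * rescale (m : ℚ[X]) bexp) ^ n =
      (∑ j : Fin m, rescale ((j : ℚ[X]) + 1) (exp ℚ[X])) ^ n *
        rescale (-(n : ℚ[X])) (exp ℚ[X]) := by
  set H := (PowerSeries.C (m : ℚ[X]) * rescale (m : ℚ[X]) bexp) ^ n
  have hX : (PowerSeries.X : ℚ[X]⟦X⟧) ^ n ≠ 0 := pow_ne_zero n PowerSeries.X_ne_zero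
  have hH : H = bexp ^ n * (∑ j ∈ range m, exp ℚ[X] ^ j) ^ n := by
    refine mul_left_cancel₀ hX ?_
    rw [← mul_pow, X_mul_C_mul_rescale_bexp, ← mul_assoc, ← mul_pow, ← mul_pow, X_mul_bexp,
      mul_geom_sum, exp_pow_eq_rescale_exp]
  rw [sum_rescale_exp_pow_mul_rescale_neg_exp, hH, ← mul_assoc, ← mul_pow, mul_comm _ bexp,
    bexp_mul_invOfUnit, one_pow, one_mul]

theorem egfCoeff_sum_rescale_exp_pow_mul_expPoly (n m r : ℕ) :
    egfCoeff r ((∑ j : Fin m, rescale ((j : ℚ[X]) + 1) (exp ℚ[X])) ^ n *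
        rescale (-(n : ℚ[X])) (exp ℚ[X]) * expPoly) =
      ∑ s ∈ range (r + 1), ∑ k ∈ range (s + 1),
        Polynomial.C ((r.choose s : ℚ) * (s.choose k : ℚ) * (-(n : ℚ)) ^ (s - k) *
          multiPowerSum n m k) * Polynomial.X ^ (r - s) := by
  rw [egfCoeff_mul]
  refine sum_congr rfl fun s _ => ?_
  rw [egfCoeff_mul, expPoly_eq_rescale_exp, egfCoeff_rescale_exp, sum_mul, mul_sum]
  refine sum_congr rfl fun k _ => ?_
  rw [egfCoeff_sum_rescale_exp_pow, egfCoeff_rescale_exp, Polynomial.algebraMap_eq]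
  simp only [map_mul, map_pow, map_neg, map_natCast]
  ring

theorem bernoulliH_eq_egfCoeff (α n : ℕ) :
    bernoulliH α n = egfCoeff n (invOfUnit bexp 1 ^ α * expPoly) := rfl

theorem egfCoeff_mul_invOfUnit_bexp_pow_mul_expPoly (n m r : ℕ) :
    egfCoeff r ((PowerSeries.C (m : ℚ[X]) * rescale (m : ℚ[X]) bexp) ^ n *
        (invOfUnit bexp 1 ^ n * expPoly)) =
      ∑ s ∈ range (r + 1),
        Polynomial.C ((r.choose s : ℚ) / ((s + n).choose n : ℚ) * (stirling2 (s + n) n : ℚ) *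
          (m : ℚ) ^ (n + s)) * bernoulliH n (r - s) := by
  have hH : PowerSeries.X ^ n * (PowerSeries.C (m : ℚ[X]) * rescale (m : ℚ[X]) bexp) ^ n =
      (rescale (m : ℚ[X]) (exp ℚ[X]) - 1) ^ n := by
    rw [← mul_pow, X_mul_C_mul_rescale_bexp]
  rw [egfCoeff_mul]
  refine sum_congr rfl fun s _ => ?_
  rw [egfCoeff_eq_of_X_pow_mul_eq_rescale_exp_sub_one_pow hH, ← bernoulliH_eq_egfCoeff,
    Polynomial.smul_eq_C_mul]
  simp only [div_eq_mul_inv, map_mul, map_pow, map_natCast]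
  ring

theorem kim_thm3_general (n m : ℕ) :
    (∑ r ∈ Finset.range n, ∑ s ∈ Finset.range (r + 1), ∑ k ∈ Finset.range (s + 1),
        Polynomial.C (((r.choose s : ℚ) * ((n - 1).choose r : ℚ) * (s.choose k : ℚ) /
            ((2 * n - 1 - r).choose n : ℚ)) * (-(n : ℚ)) ^ (s - k) *
            (stirling2 (2 * n - 1 - r) n : ℚ) * multiPowerSum n m k) *
          Polynomial.X ^ (r - s))
      = ∑ r ∈ Finset.range n, ∑ s ∈ Finset.range (r + 1),
          Polynomial.C (((r.choose s : ℚ) * ((n - 1).choose r : ℚ) /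
              (((s + n).choose n : ℚ) * ((2 * n - 1 - r).choose n : ℚ))) *
              (stirling2 (s + n) n : ℚ) * (stirling2 (2 * n - 1 - r) n : ℚ) *
              (m : ℚ) ^ (n + s)) *
            bernoulliH n (r - s) := by
  refine sum_congr rfl fun r _ => ?_
  have hseries := congrArg (egfCoeff r) (congrArg (· * expPoly) (invOfUnit_bexp_pow_mul n m))
  rw [mul_comm (invOfUnit bexp 1 ^ n), mul_assoc, egfCoeff_mul_invOfUnit_bexp_pow_mul_expPoly,
    egfCoeff_sum_rescale_exp_pow_mul_expPoly] at hseries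
  convert congrArg (Polynomial.C (((n - 1).choose r : ℚ) * (stirling2 (2 * n - 1 - r) n : ℚ) /
      ((2 * n - 1 - r).choose n : ℚ)) * ·) hseries.symm using 1 <;>
    simp only [mul_sum, ← mul_assoc, ← map_mul] <;>
    refine sum_congr rfl fun s _ => ?_
  · exact sum_congr rfl fun k _ => by congr 2; ring
  · congr 2; ring

/-- Theorem 2 of Kim–Kim: for `n, m ≥ 1`,
`∑_{r=0}^{n-1} ∑_{s=0}^{r} ∑_{k=0}^{s} (C(r,s)C(n-1,r)C(s,k)/C(2n-1-r,n)) (-n)^{s-k}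
    S₂(2n-1-r,n) S_k^{(n)}(m) x^{r-s}
 = ∑_{r=0}^{n-1} ∑_{s=0}^{r} (C(r,s)C(n-1,r)/(C(s+n,n)C(2n-1-r,n)))
    S₂(s+n,n) S₂(2n-1-r,n) m^{n+s} B_{r-s}^{(n)}(x)`. -/
theorem kim_thm3 (n m : ℕ) (hn : 0 < n) (hm : 0 < m) :
    (∑ r ∈ Finset.range n, ∑ s ∈ Finset.range (r + 1), ∑ k ∈ Finset.range (s + 1),
        Polynomial.C (((r.choose s : ℚ) * ((n - 1).choose r : ℚ) * (s.choose k : ℚ) /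
            ((2 * n - 1 - r).choose n : ℚ)) * (-(n : ℚ)) ^ (s - k) *
            (stirling2 (2 * n - 1 - r) n : ℚ) * multiPowerSum n m k) *
          Polynomial.X ^ (r - s))
      = ∑ r ∈ Finset.range n, ∑ s ∈ Finset.range (r + 1),
          Polynomial.C (((r.choose s : ℚ) * ((n - 1).choose r : ℚ) /
              (((s + n).choose n : ℚ) * ((2 * n - 1 - r).choose n : ℚ))) *
              (stirling2 (s + n) n : ℚ) * (stirling2 (2 * n - 1 - r) n : ℚ) *
              (m : ℚ) ^ (n + s)) *
            bernoulliH n (r - s) :=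
  kim_thm3_general n m
end

section
/- For all positive integers n and m and every λ ∈ ℂ with λ ≠ 0, λ ≠ 1 and $\lambda^m \neq 1$, the following identity of polynomials in x over ℂ holds: $H_{n-1}^{(n)}(x\mid\lambda) \;=\; \left(\frac{1-\lambda}{1-\lambda^{m}}\right)^{n} \lambda^{mn} \sum_{s=0}^{n-1}\sum_{k=0}^{s} \binom{s}{k}\binom{n-1}{s}\,(-n)^{s-k}\, m^{n-1-s}\, S_k^{(n)}(m\mid\lambda)\, H_{n-1-s}^{(n)}\!\left(\frac{x}{m}\,\Big|\,\lambda^{m}\right)$, where $H_{n-1-s}^{(n)}(x/m \mid \lambda^m)$ denotes the polynomial $H_{n-1-s}^{(n)}(\cdot \mid \lambda^m)$ evaluated with x replaced by x/m. -/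
open PowerSeries Polynomial Finset

/-- The `λ`-analogue of the multiple power sum
    `S_k^{(n)}(m|λ) = ∑_{0 ≤ v₁,…,v_m ≤ n, v₁+⋯+v_m = n}
       (n choose v₁,…,v_m) λ^{-(v₁+2v₂+⋯+m·v_m)} (v₁+2v₂+⋯+m·v_m)^k`. -/
noncomputable def multiPowerSumL (lam : ℂ) (n m k : ℕ) : ℂ :=
  ∑ v ∈ (Fintype.piFinset fun _ : Fin m => Finset.range (n + 1)).filter
      (fun v => ∑ i : Fin m, v i = n),
    (Nat.multinomial Finset.univ v : ℂ) * lam⁻¹ ^ (tupleWeight m v) *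
      (tupleWeight m v : ℂ) ^ k

/-- The formal power series `(e^t - λ)/(1 - λ)` over `ℂ[y]`:
    constant term `(1-λ)/(1-λ) = 1`, and `1/((1-λ)·k!)` for `k > 0`. -/
noncomputable def feexp (lam : ℂ) : PowerSeries (Polynomial ℂ) :=
  PowerSeries.mk fun k =>
    Polynomial.C ((1 - lam)⁻¹ * (if k = 0 then 1 - lam else ((k.factorial : ℂ))⁻¹))

/-- The formal power series `e^{yt} = ∑_k y^k t^k/k!` over `ℂ[y]` (with `y = X`). -/
noncomputable def expPolyC : PowerSeries (Polynomial ℂ) :=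
  PowerSeries.mk fun k => Polynomial.C ((k.factorial : ℂ)⁻¹) * Polynomial.X ^ k

/-- The Frobenius–Euler polynomial `H_n^{(α)}(y | λ)` of order `α`, defined by
    `((1-λ)/(e^t-λ))^α e^{yt} = ∑_n H_n^{(α)}(y|λ) t^n/n!`. -/
noncomputable def frobeniusEulerH (lam : ℂ) (α n : ℕ) : Polynomial ℂ :=
  (n.factorial : ℂ) • PowerSeries.coeff (R := Polynomial ℂ) n
    ((PowerSeries.invOfUnit (feexp lam) 1) ^ α * expPolyC)

/-!
Write `e = exp t` and `T = ∑_{j=1}^m λ^{-j} e^{jt}`. Since `λ · λ⁻¹ = 1`, a telescoping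
geometric sum gives `(e^t - λ) T = λ^{-m} e^t (e^{mt} - λ^m)`, that is
`(1-λ)/(1-λ^m) · λ^m · (e^t - λ)/(1-λ) · T = e^t · (e^{mt} - λ^m)/(1-λ^m)`.
Inverting and raising to the `n`-th power,
`((1-λ)/(e^t-λ))^n = ((1-λ)/(1-λ^m))^n λ^{mn} · T^n e^{-nt} · ((1-λ^m)/(e^{mt}-λ^m))^n`.
Multiplied by `e^{xt} = e^{(x/m)(mt)}`, the last factor becomes
`∑_l H_l^{(n)}(x/m | λ^m) m^l t^l/l!`, while `T^n = ∑_k S_k^{(n)}(m|λ) t^k/k!` by the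
multinomial theorem. Comparing the coefficients of `t^{n-1}` gives the identity.
-/

theorem sub_mul_sum_pow_succ_of_mul_eq_one {R : Type*} [CommRing R] {a b : R}
    (hab : a * b = 1) (e : R) (m : ℕ) :
    (e - a) * ∑ i : Fin m, (b * e) ^ (i.1 + 1) = b ^ m * (e ^ m - a ^ m) * e := by
  have hsum : ∑ i : Fin m, (b * e) ^ (i.1 + 1) = b * e * ∑ i ∈ range m, (b * e) ^ i := by
    rw [Fin.sum_univ_eq_sum_range (fun i => (b * e) ^ (i + 1)), mul_sum]
    simp only [pow_succ']
  have hba : (b * a) ^ m = 1 := by rw [mul_comm, hab, one_pow]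
  calc (e - a) * ∑ i : Fin m, (b * e) ^ (i.1 + 1)
      = e * ((∑ i ∈ range m, (b * e) ^ i) * (b * e - 1)) := by
        rw [hsum]; linear_combination (-(e * ∑ i ∈ range m, (b * e) ^ i)) * hab
    _ = e * ((b * e) ^ m - (b * a) ^ m) := by rw [geom_sum_mul, hba]
    _ = b ^ m * (e ^ m - a ^ m) * e := by ring

theorem PowerSeries.exp_pow_mul_rescale_neg_exp (A : Type*) [CommRing A] [Algebra ℚ A] (n : ℕ) :
    exp A ^ n * rescale (-(n : A)) (exp A) = 1 := by
  rw [exp_pow_eq_rescale_exp, exp_mul_exp_eq_exp_add, add_neg_cancel, rescale_zero_apply,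
    constantCoeff_exp, map_one]

theorem PowerSeries.coeff_algebraMap_mul {S R : Type*} [CommSemiring S] [CommSemiring R]
    [Algebra S R] (z : S) (f : R⟦X⟧) (k : ℕ) :
    coeff k (algebraMap S R⟦X⟧ z * f) = algebraMap S R z * coeff k f := by
  rw [PowerSeries.algebraMap_apply, PowerSeries.coeff_C_mul]

theorem PowerSeries.rescale_algebraMap {S R : Type*} [CommSemiring S] [CommSemiring R]
    [Algebra S R] (a : R) (z : S) :
    rescale a (algebraMap S R⟦X⟧ z) = algebraMap S R⟦X⟧ z := by
  ext k : 1
  rcases k with _ | k <;> simp [coeff_rescale, PowerSeries.algebraMap_apply, PowerSeries.coeff_C]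

theorem coeff_rescale_C_exp (a : ℂ) (k : ℕ) :
    coeff k (rescale (Polynomial.C a) (exp ℂ[X])) = Polynomial.C (a ^ k / k.factorial) := by
  rw [coeff_rescale, coeff_exp, Polynomial.algebraMap_apply]
  simp only [div_eq_mul_inv, one_mul, map_inv₀, map_natCast, map_mul, map_pow]

theorem feexp_eq_algebraMap_mul (lam : ℂ) :
    feexp lam
      = algebraMap ℂ ℂ[X]⟦X⟧ (1 - lam)⁻¹ * (exp ℂ[X] - algebraMap ℂ ℂ[X]⟦X⟧ lam) := by
  ext k : 1
  rw [coeff_algebraMap_mul, Polynomial.algebraMap_eq, map_sub, feexp, coeff_mk, coeff_exp,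
    PowerSeries.algebraMap_apply, PowerSeries.coeff_C, Polynomial.algebraMap_apply]
  rcases k with _ | k <;> simp [mul_sub]

theorem rescale_feexp (lam : ℂ) (m : ℕ) :
    rescale (Polynomial.C (m : ℂ)) (feexp lam)
      = algebraMap ℂ ℂ[X]⟦X⟧ (1 - lam)⁻¹ * (exp ℂ[X] ^ m - algebraMap ℂ ℂ[X]⟦X⟧ lam) := by
  rw [feexp_eq_algebraMap_mul, map_mul, map_sub, rescale_algebraMap, rescale_algebraMap,
    map_natCast, exp_pow_eq_rescale_exp]

theorem feexp_mul_invOfUnit {lam : ℂ} (h1 : lam ≠ 1) :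
    feexp lam * invOfUnit (feexp lam) 1 = 1 := by
  refine mul_invOfUnit _ _ ?_
  rw [← coeff_zero_eq_constantCoeff_apply, feexp, coeff_mk, if_pos rfl,
    inv_mul_cancel₀ (sub_ne_zero.mpr h1.symm), Polynomial.C_1, Units.val_one]

noncomputable def twistedExpSum (lam : ℂ) (m : ℕ) : ℂ[X]⟦X⟧ :=
  ∑ i : Fin m, (algebraMap ℂ ℂ[X]⟦X⟧ lam⁻¹ * exp ℂ[X]) ^ (i.1 + 1)

theorem feexp_mul_twistedExpSum {lam : ℂ} (h0 : lam ≠ 0) (h1 : lam ≠ 1) {m : ℕ}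
    (hm1 : lam ^ m ≠ 1) :
    algebraMap ℂ ℂ[X]⟦X⟧ ((1 - lam) / (1 - lam ^ m) * lam ^ m) * feexp lam *
        twistedExpSum lam m
      = exp ℂ[X] * rescale (Polynomial.C (m : ℂ)) (feexp (lam ^ m)) := by
  have hinv : algebraMap ℂ ℂ[X]⟦X⟧ lam * algebraMap ℂ ℂ[X]⟦X⟧ lam⁻¹ = 1 := by
    rw [← map_mul, mul_inv_cancel₀ h0, map_one]
  have hconst : (1 - lam) / (1 - lam ^ m) * lam ^ m * (1 - lam)⁻¹ * lam⁻¹ ^ m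
      = (1 - lam ^ m)⁻¹ := by
    have : 1 - lam ≠ 0 := sub_ne_zero.mpr h1.symm
    have : 1 - lam ^ m ≠ 0 := sub_ne_zero.mpr hm1.symm
    rw [inv_pow]
    field_simp
  rw [mul_assoc, feexp_eq_algebraMap_mul, mul_assoc, twistedExpSum,
    sub_mul_sum_pow_succ_of_mul_eq_one hinv, rescale_feexp, ← map_pow, ← hconst]
  simp only [map_mul, map_pow]
  ring

theorem invOfUnit_feexp_pow_eq {lam : ℂ} (h0 : lam ≠ 0) (h1 : lam ≠ 1) {m : ℕ}
    (hm1 : lam ^ m ≠ 1) (n : ℕ) :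
    invOfUnit (feexp lam) 1 ^ n
      = algebraMap ℂ ℂ[X]⟦X⟧ (((1 - lam) / (1 - lam ^ m) * lam ^ m) ^ n) *
          (twistedExpSum lam m ^ n * rescale (Polynomial.C (-(n : ℂ))) (exp ℂ[X])) *
          rescale (Polynomial.C (m : ℂ)) (invOfUnit (feexp (lam ^ m)) 1 ^ n) := by
  set u := invOfUnit (feexp lam) 1
  set v := rescale (Polynomial.C (m : ℂ)) (invOfUnit (feexp (lam ^ m)) 1)
  set κ := algebraMap ℂ ℂ[X]⟦X⟧ ((1 - lam) / (1 - lam ^ m) * lam ^ m)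
  set T := twistedExpSum lam m
  have hv : rescale (Polynomial.C (m : ℂ)) (feexp (lam ^ m)) * v = 1 := by
    rw [← map_mul, feexp_mul_invOfUnit hm1, map_one]
  have key : κ * T * v = exp ℂ[X] * u :=
    calc κ * T * v = feexp lam * u * (κ * T) * v := by rw [feexp_mul_invOfUnit h1, one_mul]
      _ = u * (κ * feexp lam * T) * v := by ring
      _ = u * exp ℂ[X] * (rescale (Polynomial.C (m : ℂ)) (feexp (lam ^ m)) * v) := by
        rw [feexp_mul_twistedExpSum h0 h1 hm1]; ring
      _ = exp ℂ[X] * u := by rw [hv]; ring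
  have hneg : Polynomial.C (-(n : ℂ)) = -(n : ℂ[X]) := by simp
  calc u ^ n = exp ℂ[X] ^ n * rescale (-(n : ℂ[X])) (exp ℂ[X]) * u ^ n := by
        rw [exp_pow_mul_rescale_neg_exp, one_mul]
    _ = (exp ℂ[X] * u) ^ n * rescale (-(n : ℂ[X])) (exp ℂ[X]) := by ring
    _ = _ := by rw [← key, hneg, map_pow, map_pow]; ring

theorem filter_piFinset_range_eq_piAntidiag {ι : Type*} [Fintype ι] [DecidableEq ι] (n : ℕ) :
    {v ∈ Fintype.piFinset fun _ : ι => range (n + 1) | ∑ i, v i = n} = piAntidiag univ n := by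
  ext v
  simp only [mem_filter, Fintype.mem_piFinset, mem_range, mem_piAntidiag, mem_univ,
    Nat.lt_succ_iff, ne_eq, implies_true, and_true, and_iff_right_iff_imp]
  rintro rfl i
  exact single_le_sum (fun j _ => Nat.zero_le (v j)) (mem_univ i)

theorem coeff_twistedExpSum_pow (lam : ℂ) (m n k : ℕ) :
    coeff k (twistedExpSum lam m ^ n)
      = Polynomial.C (multiPowerSumL lam n m k / k.factorial) := by
  have hterm (v : Fin m → ℕ) :
      ∏ i, ((algebraMap ℂ ℂ[X]⟦X⟧ lam⁻¹ * exp ℂ[X]) ^ (i.1 + 1)) ^ v i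
        = algebraMap ℂ ℂ[X]⟦X⟧ (lam⁻¹ ^ tupleWeight m v) *
            rescale (Polynomial.C (tupleWeight m v : ℂ)) (exp ℂ[X]) := by
    rw [tupleWeight, map_pow, map_natCast Polynomial.C, ← exp_pow_eq_rescale_exp, ← mul_pow]
    simp only [← pow_mul, prod_pow_eq_pow_sum]
  rw [twistedExpSum, sum_pow_eq_sum_piAntidiag, map_sum, multiPowerSumL,
    filter_piFinset_range_eq_piAntidiag, sum_div, map_sum]
  refine sum_congr rfl fun v _ => ?_
  rw [hterm, ← map_natCast (algebraMap ℂ ℂ[X]⟦X⟧), ← mul_assoc, ← map_mul, coeff_algebraMap_mul,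
    Polynomial.algebraMap_eq, coeff_rescale_C_exp, ← Polynomial.C_mul]
  congr 1
  ring

theorem coeff_twistedExpSum_pow_mul_rescale_exp (lam : ℂ) (m n : ℕ) (a : ℂ) (s : ℕ) :
    coeff s (twistedExpSum lam m ^ n * rescale (Polynomial.C a) (exp ℂ[X]))
      = Polynomial.C (∑ k ∈ range (s + 1),
          multiPowerSumL lam n m k / k.factorial * (a ^ (s - k) / (s - k).factorial)) := by
  rw [PowerSeries.coeff_mul, Nat.sum_antidiagonal_eq_sum_range_succ_mk, map_sum]
  simp only [coeff_twistedExpSum_pow, coeff_rescale_C_exp, ← Polynomial.C_mul]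

theorem map_compRingHom_invOfUnit_feexp {mu : ℂ} (h1 : mu ≠ 1) (q : ℂ[X]) :
    map (compRingHom q) (invOfUnit (feexp mu) 1) = invOfUnit (feexp mu) 1 := by
  have hF : map (compRingHom q) (feexp mu) = feexp mu := by
    ext k : 1
    rw [PowerSeries.coeff_map, feexp, coeff_mk, coe_compRingHom_apply, C_comp]
  refine (left_inv_eq_right_inv (a := feexp mu) ?_ ?_).symm
  · rw [mul_comm, feexp_mul_invOfUnit h1]
  · simpa only [map_mul, map_one, hF] using
      congrArg (PowerSeries.map (compRingHom q)) (feexp_mul_invOfUnit h1)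

theorem rescale_map_compRingHom_expPolyC {c : ℂ} (hc : c ≠ 0) :
    rescale (Polynomial.C c) (map (compRingHom (Polynomial.C c⁻¹ * Polynomial.X)) expPolyC)
      = expPolyC := by
  ext k : 1
  rw [coeff_rescale, PowerSeries.coeff_map, expPolyC, coeff_mk, coe_compRingHom_apply, mul_comp,
    C_comp, X_pow_comp, mul_pow, ← C_pow, mul_left_comm, ← mul_assoc, ← C_pow, ← C_mul,
    ← mul_assoc, ← C_mul, mul_assoc, ← mul_pow, mul_inv_cancel₀ hc, one_pow, mul_one]

theorem coeff_rescale_invOfUnit_feexp_pow_mul_expPolyC {mu : ℂ} (h1 : mu ≠ 1) {c : ℂ}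
    (hc : c ≠ 0) (n l : ℕ) :
    coeff l (rescale (Polynomial.C c) (invOfUnit (feexp mu) 1 ^ n) * expPolyC)
      = Polynomial.C (c ^ l / l.factorial) *
          (frobeniusEulerH mu n l).comp (Polynomial.C c⁻¹ * Polynomial.X) := by
  have hmap : rescale (Polynomial.C c) (invOfUnit (feexp mu) 1 ^ n) * expPolyC
      = rescale (Polynomial.C c) (map (compRingHom (Polynomial.C c⁻¹ * Polynomial.X))
          (invOfUnit (feexp mu) 1 ^ n * expPolyC)) := by
    rw [map_mul, map_pow (PowerSeries.map _), map_compRingHom_invOfUnit_feexp h1, map_mul,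
      rescale_map_compRingHom_expPolyC hc]
  have hH : coeff l (invOfUnit (feexp mu) 1 ^ n * expPolyC)
      = Polynomial.C (l.factorial : ℂ)⁻¹ * frobeniusEulerH mu n l := by
    rw [frobeniusEulerH, Polynomial.smul_eq_C_mul, ← mul_assoc, ← C_mul,
      inv_mul_cancel₀ (Nat.cast_ne_zero.mpr l.factorial_ne_zero), C_1, one_mul]
  rw [hmap, coeff_rescale, PowerSeries.coeff_map, coe_compRingHom_apply, hH, mul_comp, C_comp,
    ← C_pow, ← mul_assoc, ← C_mul, div_eq_mul_inv]

theorem cast_choose_mul_choose {K : Type*} [Field K] [CharZero K] {N s k : ℕ} (hks : k ≤ s)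
    (hsN : s ≤ N) :
    (s.choose k * N.choose s : K)
      = N.factorial / (k.factorial * (s - k).factorial * (N - s).factorial) := by
  have := Nat.factorial_ne_zero s
  rw [Nat.cast_choose K hks, Nat.cast_choose K hsN]
  field_simp

theorem factorial_mul_sum_mul_eq_sum_choose {K : Type*} [Field K] [CharZero K] (S : ℕ → K)
    (a b : K) {N s : ℕ} (hsN : s ≤ N) :
    N.factorial * (∑ k ∈ range (s + 1), S k / k.factorial * (a ^ (s - k) / (s - k).factorial)) *
        (b ^ (N - s) / (N - s).factorial)
      = ∑ k ∈ range (s + 1), s.choose k * N.choose s * a ^ (s - k) * b ^ (N - s) * S k := by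
  rw [mul_sum, sum_mul]
  refine sum_congr rfl fun k hk => ?_
  rw [cast_choose_mul_choose (Nat.lt_succ_iff.mp (mem_range.mp hk)) hsN]
  ring

/-- Theorem 6 of Kim–Kim: for `n, m ≥ 1` and `λ ∈ ℂ` with `λ ≠ 0`, `λ ≠ 1`, `λ^m ≠ 1`,
`H_{n-1}^{(n)}(x|λ) = ((1-λ)/(1-λ^m))^n λ^{mn} ∑_{s=0}^{n-1} ∑_{k=0}^{s}
    C(s,k)C(n-1,s)(-n)^{s-k} m^{n-1-s} S_k^{(n)}(m|λ) H_{n-1-s}^{(n)}(x/m | λ^m)`. -/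
theorem kim_thm6 (n m : ℕ) (hn : 0 < n) (hm : 0 < m) (lam : ℂ)
    (h0 : lam ≠ 0) (h1 : lam ≠ 1) (hm1 : lam ^ m ≠ 1) :
    frobeniusEulerH lam n (n - 1)
      = Polynomial.C (((1 - lam) / (1 - lam ^ m)) ^ n * lam ^ (m * n)) *
          ∑ s ∈ Finset.range n, ∑ k ∈ Finset.range (s + 1),
            Polynomial.C ((s.choose k : ℂ) * ((n - 1).choose s : ℂ) * (-(n : ℂ)) ^ (s - k) *
                (m : ℂ) ^ (n - 1 - s) * multiPowerSumL lam n m k) *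
              (frobeniusEulerH (lam ^ m) n (n - 1 - s)).comp
                (Polynomial.C ((m : ℂ)⁻¹) * Polynomial.X) := by
  have hmC : (m : ℂ) ≠ 0 := Nat.cast_ne_zero.mpr hm.ne'
  rw [frobeniusEulerH, invOfUnit_feexp_pow_eq h0 h1 hm1, mul_assoc, mul_assoc,
    coeff_algebraMap_mul, Polynomial.algebraMap_eq, PowerSeries.coeff_mul,
    Nat.sum_antidiagonal_eq_sum_range_succ_mk, Nat.succ_eq_add_one, Nat.sub_add_cancel hn,
    Polynomial.smul_eq_C_mul, mul_left_comm, mul_sum, mul_pow, ← pow_mul]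
  refine congrArg _ (sum_congr rfl fun s hs => ?_)
  dsimp only
  rw [coeff_twistedExpSum_pow_mul_rescale_exp,
    coeff_rescale_invOfUnit_feexp_pow_mul_expPolyC hm1 hmC, ← sum_mul, ← mul_assoc, ← C_mul,
    ← mul_assoc, ← C_mul, ← map_sum,
    factorial_mul_sum_mul_eq_sum_choose _ _ _ (Nat.le_sub_one_of_lt (mem_range.mp hs))]
end
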